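/- arXiv:2507.04984 — 2 statements merged into one kernel-verified Lean document; each statement's English description precedes it below -/
import Mathlib

section
/- Let V be a vector space over ℝ, x₀, x_T ∈ V, N ≥ 1, and let t : {0, 1, …, N} → ℝ be a strictly increasing sequence of times with t₀ > 0 and t_N = T. Define μ_N = x_T and μ_{i} = (t_i / t_{i+1})·μ_{i+1} + (1 − t_i / t_{i+1})·x₀ for 0 ≤ i < N. Then for every index i, μ_i = x₀ if and only if x_T = x₀. Consequently, if x_T = x₀ the entire expected sampling process is the constant (identity) trajectory μ_i = x₀ for all i, while if x_T ≠ x₀ no expected iterate ever equals x₀. -/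
/-- For a strictly increasing positive time schedule `t 0 < t 1 < … < t N = T`
with `N ≥ 1`, and expected BBDM sampling iterates `μ N = x_T`,
`μ i = (t i / t (i+1)) • μ (i+1) + (1 − t i / t (i+1)) • x₀`, every iterate satisfies
`μ i = x₀ ↔ x_T = x₀`: the expected sampling trajectory is constant at `x₀` iff the
endpoints coincide, and otherwise never reaches `x₀`. -/
theorem bbdm_expected_iterate_eq_x0_iff
    {V : Type*} [AddCommGroup V] [Module ℝ V]
    (x₀ xT : V) (N : ℕ) (hN : 1 ≤ N) (t : ℕ → ℝ) (T : ℝ)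
    (hmono : ∀ i, i < N → t i < t (i + 1))
    (ht0 : 0 < t 0) (htN : t N = T)
    (μ : ℕ → V) (hμN : μ N = xT)
    (hμ : ∀ i, i < N → μ i = (t i / t (i + 1)) • μ (i + 1) + (1 - t i / t (i + 1)) • x₀) :
    ∀ i, i ≤ N → (μ i = x₀ ↔ xT = x₀) := by
  -- positivity of all times up to N
  have hpos : ∀ i, i ≤ N → 0 < t i := by
    intro i hi
    induction i with
    | zero => exact ht0
    | succ n ih =>
      have hn : n < N := Nat.lt_of_succ_le hi
      exact lt_trans (ih (le_of_lt hn)) (hmono n hn)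
  -- key identity by downward induction
  have key : ∀ d i, i + d = N → μ i - x₀ = (t i / t N) • (xT - x₀) := by
    intro d
    induction d with
    | zero =>
      intro i hi
      simp only [Nat.add_zero] at hi
      subst hi
      rw [hμN, div_self (ne_of_gt (hpos i le_rfl)), one_smul]
    | succ d ih =>
      intro i hi
      have hiN : i < N := by omega
      have h1 : μ (i + 1) - x₀ = (t (i + 1) / t N) • (xT - x₀) := ih (i + 1) (by omega)
      have hμi := hμ i hiN
      have hti1 : t (i + 1) ≠ 0 := ne_of_gt (hpos (i + 1) hiN)
      have htN0 : t N ≠ 0 := ne_of_gt (hpos N le_rfl)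
      have : μ i - x₀ = (t i / t (i + 1)) • (μ (i + 1) - x₀) := by
        rw [hμi, smul_sub, sub_smul, one_smul]
        abel
      rw [this, h1, smul_smul]
      congr 1
      field_simp
  intro i hi
  have hk := key (N - i) i (by omega)
  have hc : t i / t N ≠ 0 := div_ne_zero (ne_of_gt (hpos i hi)) (ne_of_gt (hpos N le_rfl))
  constructor
  · intro h
    rw [h, sub_self] at hk
    have := (smul_eq_zero.mp hk.symm).resolve_left hc
    exact sub_eq_zero.mp this
  · intro h
    rw [h, sub_self, smul_zero] at hk
    exact sub_eq_zero.mp hk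
end

section
/- Let T > 0, 0 < s < t < T, and x₀, x_T ∈ ℝ. Let γ_t be the Gaussian measure on ℝ with mean (1 − t/T)·x₀ + (t/T)·x_T and variance t(T − t)/T, and let ζ be the Gaussian measure on ℝ with mean 0 and variance s(t − s)/t. Then the pushforward of the product measure γ_t ⊗ ζ under the map (x, z) ↦ (s/t)·x + (1 − s/t)·x₀ + z equals the Gaussian measure on ℝ with mean (1 − s/T)·x₀ + (s/T)·x_T and variance s(T − s)/T. That is, one exact BBDM sampling step carries the Brownian bridge marginal at time t to the Brownian bridge marginal at time s. -/
open MeasureTheory ProbabilityTheory Real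

open scoped NNReal ENNReal

namespace BBDMAux

variable (m y : ℝ) (v1 v2 : ℝ≥0)

lemma key_eq (h1 : v1 ≠ 0) (h2 : v2 ≠ 0) (x : ℝ) :
    gaussianPDFReal m v1 x * gaussianPDFReal x v2 y =
      ((√(2 * π * (v1 : ℝ)))⁻¹ * (√(2 * π * (v2 : ℝ)))⁻¹
          * rexp (-(y - m) ^ 2 / (2 * ((v1 : ℝ) + v2))))
        * rexp (-(((v1 : ℝ) + v2) / (2 * v1 * v2))
            * (x - (m + v1 * (y - m) / ((v1 : ℝ) + v2))) ^ 2) := by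
  have ha : (0:ℝ) < v1 := lt_of_le_of_ne v1.coe_nonneg (by exact_mod_cast (Ne.symm h1))
  have hb : (0:ℝ) < v2 := lt_of_le_of_ne v2.coe_nonneg (by exact_mod_cast (Ne.symm h2))
  have hab : (0:ℝ) < (v1:ℝ) + v2 := by linarith
  unfold gaussianPDFReal
  rw [mul_mul_mul_comm, ← Real.exp_add]
  rw [show -(x - m) ^ 2 / (2 * (v1:ℝ)) + -(y - x) ^ 2 / (2 * (v2:ℝ))
      = (-(y - m) ^ 2 / (2 * ((v1 : ℝ) + v2)))
        + (-(((v1 : ℝ) + v2) / (2 * v1 * v2))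
            * (x - (m + v1 * (y - m) / ((v1 : ℝ) + v2))) ^ 2) from by field_simp; ring,
    Real.exp_add]
  ring

lemma key_integrable (h1 : v1 ≠ 0) (h2 : v2 ≠ 0) :
    Integrable (fun x => gaussianPDFReal m v1 x * gaussianPDFReal x v2 y) := by
  have ha : (0:ℝ) < v1 := lt_of_le_of_ne v1.coe_nonneg (by exact_mod_cast (Ne.symm h1))
  have hb : (0:ℝ) < v2 := lt_of_le_of_ne v2.coe_nonneg (by exact_mod_cast (Ne.symm h2))
  have hk : (0:ℝ) < ((v1:ℝ) + v2) / (2 * v1 * v2) := by positivity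
  rw [show (fun x => gaussianPDFReal m v1 x * gaussianPDFReal x v2 y)
      = fun x => ((√(2 * π * (v1 : ℝ)))⁻¹ * (√(2 * π * (v2 : ℝ)))⁻¹
          * rexp (-(y - m) ^ 2 / (2 * ((v1 : ℝ) + v2))))
        * rexp (-(((v1 : ℝ) + v2) / (2 * v1 * v2))
            * (x - (m + v1 * (y - m) / ((v1 : ℝ) + v2))) ^ 2)
      from funext (key_eq m y v1 v2 h1 h2)]
  exact ((integrable_exp_neg_mul_sq hk).comp_sub_right _).const_mul _

lemma key_integral (h1 : v1 ≠ 0) (h2 : v2 ≠ 0) :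
    ∫ x, gaussianPDFReal m v1 x * gaussianPDFReal x v2 y
      = gaussianPDFReal m (v1 + v2) y := by
  have ha : (0:ℝ) < v1 := lt_of_le_of_ne v1.coe_nonneg (by exact_mod_cast (Ne.symm h1))
  have hb : (0:ℝ) < v2 := lt_of_le_of_ne v2.coe_nonneg (by exact_mod_cast (Ne.symm h2))
  have hab : (0:ℝ) < (v1:ℝ) + v2 := by linarith
  have hk : (0:ℝ) < ((v1:ℝ) + v2) / (2 * v1 * v2) := by positivity
  simp_rw [key_eq m y v1 v2 h1 h2]
  rw [integral_const_mul]
  rw [integral_sub_right_eq_self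
    (fun x => rexp (-(((v1 : ℝ) + v2) / (2 * v1 * v2)) * x ^ 2))
    (m + v1 * (y - m) / ((v1 : ℝ) + v2))]
  rw [integral_gaussian]
  unfold gaussianPDFReal
  push_cast
  rw [show -(y - m) ^ 2 / (2 * ((v1:ℝ) + v2)) = -(y - m) ^ 2 / (2 * ((v1:ℝ) + v2)) from rfl]
  have hC : (√(2 * π * (v1:ℝ)))⁻¹ * (√(2 * π * (v2:ℝ)))⁻¹
      * √(π / (((v1:ℝ) + v2) / (2 * v1 * v2))) = (√(2 * π * ((v1:ℝ) + v2)))⁻¹ := by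
    rw [← Real.sqrt_inv, ← Real.sqrt_inv, ← Real.sqrt_inv,
      ← Real.sqrt_mul (by positivity), ← Real.sqrt_mul (by positivity)]
    congr 1
    have hπ := Real.pi_pos
    field_simp
  rw [← hC]
  ring

lemma gauss_conv (h1 : v1 ≠ 0) (h2 : v2 ≠ 0) :
    ((gaussianReal m v1).prod (gaussianReal 0 v2)).map (fun p : ℝ × ℝ => p.1 + p.2)
      = gaussianReal m (v1 + v2) := by
  have h12 : v1 + v2 ≠ 0 := by simp [h1]
  have hmeas2 : Measurable fun p : ℝ × ℝ => gaussianPDF p.1 v2 p.2 := by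
    unfold gaussianPDF gaussianPDFReal
    fun_prop
  ext s hs
  rw [Measure.map_apply (by fun_prop : Measurable fun p : ℝ × ℝ => p.1 + p.2) hs,
    Measure.prod_apply (hs.preimage (by fun_prop : Measurable fun p : ℝ × ℝ => p.1 + p.2))]
  have hfib : ∀ x : ℝ,
      gaussianReal 0 v2 (Prod.mk x ⁻¹' ((fun p : ℝ × ℝ => p.1 + p.2) ⁻¹' s))
        = ∫⁻ y in s, gaussianPDF x v2 y := by
    intro x
    have hpre : Prod.mk x ⁻¹' ((fun p : ℝ × ℝ => p.1 + p.2) ⁻¹' s)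
        = (fun z => x + z) ⁻¹' s := rfl
    rw [hpre, ← Measure.map_apply (measurable_const_add x) hs,
      gaussianReal_map_const_add, zero_add, gaussianReal_apply _ h2]
  simp_rw [hfib]
  rw [gaussianReal_of_var_ne_zero _ h1,
    lintegral_withDensity_eq_lintegral_mul _ (measurable_gaussianPDF _ _)
      (hmeas2.lintegral_prod_right')]
  simp only [Pi.mul_apply]
  have hswap : ∫⁻ x, gaussianPDF m v1 x * ∫⁻ y in s, gaussianPDF x v2 y
      = ∫⁻ y in s, ∫⁻ x, gaussianPDF m v1 x * gaussianPDF x v2 y := by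
    have : ∀ x, gaussianPDF m v1 x * ∫⁻ y in s, gaussianPDF x v2 y
        = ∫⁻ y in s, gaussianPDF m v1 x * gaussianPDF x v2 y := fun x =>
      (lintegral_const_mul' _ _ ENNReal.ofReal_ne_top).symm
    simp_rw [this]
    exact lintegral_lintegral_swap
      (((measurable_gaussianPDF m v1).comp measurable_fst).mul hmeas2).aemeasurable
  rw [hswap]
  rw [gaussianReal_apply _ h12]
  refine lintegral_congr fun y => ?_
  unfold gaussianPDF
  simp_rw [← ENNReal.ofReal_mul (gaussianPDFReal_nonneg m v1 _)]
  rw [← ofReal_integral_eq_lintegral_ofReal (key_integrable m y v1 v2 h1 h2)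
      (ae_of_all _ fun x => mul_nonneg (gaussianPDFReal_nonneg _ _ _)
        (gaussianPDFReal_nonneg _ _ _)),
    key_integral m y v1 v2 h1 h2]

end BBDMAux

open BBDMAux in
/-- For `0 < s < t < T`, the exact BBDM sampling step
`(x, z) ↦ (s/t)·x + (1 − s/t)·x₀ + z`, applied to the product of the Brownian bridge
marginal at time `t` (Gaussian with mean `(1 − t/T)·x₀ + (t/T)·x_T`, variance `t(T−t)/T`)
and the noise `N(0, s(t−s)/t)`, yields the Brownian bridge marginal at time `s`
(Gaussian with mean `(1 − s/T)·x₀ + (s/T)·x_T`, variance `s(T−s)/T`). -/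
theorem bbdm_step_pushforward_bridge_marginal
    (T s t : ℝ) (hT : 0 < T) (hs : 0 < s) (hst : s < t) (htT : t < T) (x₀ xT : ℝ) :
    ((gaussianReal ((1 - t / T) * x₀ + (t / T) * xT) ((t * (T - t) / T).toNNReal)).prod
        (gaussianReal 0 ((s * (t - s) / t).toNNReal))).map
      (fun p : ℝ × ℝ => (s / t) * p.1 + (1 - s / t) * x₀ + p.2)
      = gaussianReal ((1 - s / T) * x₀ + (s / T) * xT) ((s * (T - s) / T).toNNReal) := by
  have ht : 0 < t := hs.trans hst
  have ht' : t ≠ 0 := ht.ne'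
  have hT' : T ≠ 0 := hT.ne'
  set a : ℝ := s / t with ha
  set b : ℝ := (1 - s / t) * x₀ with hb
  set μt : ℝ := (1 - t / T) * x₀ + (t / T) * xT with hμt
  set v1 : ℝ≥0 := (t * (T - t) / T).toNNReal with hv1
  set v2 : ℝ≥0 := (s * (t - s) / t).toNNReal with hv2
  have hv1pos : (0:ℝ) < t * (T - t) / T := by
    apply div_pos (mul_pos ht (by linarith)) hT
  have hv2pos : (0:ℝ) < s * (t - s) / t := by
    apply div_pos (mul_pos hs (by linarith)) ht
  have hv2ne : v2 ≠ 0 := by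
    simp [hv2, Real.toNNReal_eq_zero, not_le, hv2pos]
  have hf : Measurable fun x : ℝ => a * x + b := by fun_prop
  have hmapγ : (gaussianReal μt v1).map (fun x : ℝ => a * x + b)
      = gaussianReal (a * μt + b) (NNReal.mk (a ^ 2) (sq_nonneg a) * v1) := by
    have : (fun x : ℝ => a * x + b) = (· + b) ∘ (a * ·) := rfl
    rw [this, ← Measure.map_map (measurable_add_const b) (measurable_const_mul a),
      gaussianReal_map_const_mul, gaussianReal_map_add_const]
  have hdecomp : (fun p : ℝ × ℝ => a * p.1 + b + p.2)
      = (fun p : ℝ × ℝ => p.1 + p.2) ∘ (Prod.map (fun x : ℝ => a * x + b) id) := rfl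
  rw [hdecomp, ← Measure.map_map (by fun_prop : Measurable fun p : ℝ × ℝ => p.1 + p.2) (hf.prodMap measurable_id),
    ← Measure.map_prod_map _ _ hf measurable_id, Measure.map_id, hmapγ,
    gauss_conv _ (NNReal.mk (a ^ 2) (sq_nonneg a) * v1) v2
      (by
        simp only [ne_eq, mul_eq_zero, not_or]
        constructor
        · intro h
          have := congrArg (NNReal.toReal) h
          simp only [NNReal.coe_mk, NNReal.coe_zero] at this
          have : a ≠ 0 := by positivity
          exact absurd (pow_eq_zero_iff (n := 2) (by norm_num) |>.mp (by simpa using ‹(a:ℝ)^2 = 0›)) this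
        · simp [hv1, Real.toNNReal_eq_zero, not_le, hv1pos])
      hv2ne]
  congr 1
  · rw [ha, hb, hμt]; field_simp; ring
  · apply NNReal.coe_injective
    simp only [NNReal.coe_add, NNReal.coe_mul, NNReal.coe_mk, hv1, hv2,
      Real.coe_toNNReal _ hv1pos.le, Real.coe_toNNReal _ hv2pos.le,
      Real.coe_toNNReal _ (div_pos (mul_pos hs (by linarith : (0:ℝ) < T - s)) hT).le]
    rw [ha]; field_simp; ring
end
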